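/- For every integer n ≥ 0 and every r ∈ (0,1), 0 < r^n/(2^{n+1} n!) ≤ J_n(r) ≤ r^n/(2^n n!). -/

import Mathlib

/-!
Since `|r t| < 1` on `[-1, 1]`, the factor `cos (r t)` of the Poisson integrand lies in `[1/2, 1]`,
so `J_n(r)` lies between one half and the whole of `r^n / (2^n Γ(n + 1/2) √π) · W_n`, where
`W_n = ∫_{-1}^{1} (1 - t²)^(n - 1/2) dt`. The substitution `t = cos x` turns `W_n` into Wallis'
integral `∫_0^π sin^(2n) x dx = π ∏_{i<n} (2i+1)/(2i+2)`, and by the functional equation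
of `Γ` this product is `√π Γ(n + 1/2) / n!`.
-/

open Real Set

/-- Bessel function of the first kind of integer order, via the Poisson integral
representation. -/
noncomputable def besselJ (n : ℕ) (r : ℝ) : ℝ :=
  r ^ n / (2 ^ n * Real.Gamma ((n : ℝ) + 1 / 2) * Real.sqrt Real.pi) *
    ∫ t in (-1 : ℝ)..1, Real.cos (r * t) * (1 - t ^ 2) ^ ((n : ℝ) - 1 / 2)

open MeasureTheory Nat

lemma image_cos_Ioo : cos '' Ioo 0 π = Ioo (-1) 1 :=
  cosPartialHomeomorph.image_source_eq_target

lemma mul_sq_rpow_nat_sub_half {s : ℝ} (hs : 0 < s) (n : ℕ) :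
    s * (s ^ 2) ^ ((n : ℝ) - 1 / 2) = s ^ (2 * n) := by
  rw [rpow_sub (by positivity), rpow_natCast, ← sqrt_eq_rpow, sqrt_sq hs.le, ← pow_mul]
  field_simp

lemma abs_deriv_cos_smul_one_sub_cos_sq_rpow (n : ℕ) {x : ℝ} (hx : x ∈ Ioo 0 π) :
    |-sin x| • (1 - cos x ^ 2) ^ ((n : ℝ) - 1 / 2) = sin x ^ (2 * n) := by
  have hs : 0 < sin x := sin_pos_of_pos_of_lt_pi hx.1 hx.2
  rw [abs_neg, abs_of_pos hs, smul_eq_mul, ← sin_sq, mul_sq_rpow_nat_sub_half hs]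

lemma intervalIntegrable_one_sub_sq_rpow (n : ℕ) :
    IntervalIntegrable (fun t : ℝ => (1 - t ^ 2) ^ ((n : ℝ) - 1 / 2)) volume (-1) 1 := by
  rw [intervalIntegrable_iff_integrableOn_Ioo_of_le (by norm_num), ← image_cos_Ioo,
    integrableOn_image_iff_integrableOn_abs_deriv_smul measurableSet_Ioo
      (fun x _ => (hasDerivAt_cos x).hasDerivWithinAt) (injOn_cos.mono Ioo_subset_Icc_self)]
  refine IntegrableOn.congr_fun ?_
    (fun x hx => (abs_deriv_cos_smul_one_sub_cos_sq_rpow n hx).symm) measurableSet_Ioo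
  exact (continuous_sin.pow _).integrableOn_Icc.mono_set Ioo_subset_Icc_self

lemma sqrt_pi_mul_Gamma_nat_add_half_div_factorial (n : ℕ) :
    √π * Gamma ((n : ℝ) + 1 / 2) / n ! =
      π * ∏ i ∈ Finset.range n, (2 * (i : ℝ) + 1) / (2 * i + 2) := by
  induction n with
  | zero =>
    rw [Nat.cast_zero, zero_add, Gamma_one_half_eq, factorial_zero, Nat.cast_one, div_one,
      Finset.prod_range_zero, mul_one, mul_self_sqrt pi_pos.le]
  | succ k ih =>
    have hG : Gamma (((k + 1 : ℕ) : ℝ) + 1 / 2) = (k + 1 / 2) * Gamma (k + 1 / 2) := by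
      rw [Nat.cast_succ, add_right_comm, Gamma_add_one (by positivity)]
    rw [hG, Nat.factorial_succ, Finset.prod_range_succ, ← mul_assoc π, ← ih]
    push_cast
    field_simp

lemma integral_one_sub_sq_rpow (n : ℕ) :
    ∫ t in (-1 : ℝ)..1, (1 - t ^ 2) ^ ((n : ℝ) - 1 / 2) =
      √π * Gamma ((n : ℝ) + 1 / 2) / n ! := by
  rw [intervalIntegral.integral_of_le (by norm_num), integral_Ioc_eq_integral_Ioo,
    ← image_cos_Ioo, integral_image_eq_integral_abs_deriv_smul measurableSet_Ioo
      (fun x _ => (hasDerivAt_cos x).hasDerivWithinAt) (injOn_cos.mono Ioo_subset_Icc_self),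
    setIntegral_congr_fun measurableSet_Ioo
      (fun x hx => abs_deriv_cos_smul_one_sub_cos_sq_rpow n hx),
    ← integral_Ioc_eq_integral_Ioo, ← intervalIntegral.integral_of_le pi_pos.le,
    integral_sin_pow_even, sqrt_pi_mul_Gamma_nat_add_half_div_factorial]

lemma half_le_cos_of_abs_le_one {x : ℝ} (hx : |x| ≤ 1) : 1 / 2 ≤ cos x := by
  have : x ^ 2 ≤ 1 := by nlinarith [sq_abs x, abs_nonneg x]
  linarith [one_sub_sq_div_two_le_cos (x := x)]

lemma integral_cos_mul_one_sub_sq_rpow_mem_Icc (n : ℕ) {r : ℝ} (hr : |r| ≤ 1) :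
    ∫ t in (-1 : ℝ)..1, cos (r * t) * (1 - t ^ 2) ^ ((n : ℝ) - 1 / 2) ∈
      Icc ((1 / 2) * ∫ t in (-1 : ℝ)..1, (1 - t ^ 2) ^ ((n : ℝ) - 1 / 2))
        (∫ t in (-1 : ℝ)..1, (1 - t ^ 2) ^ ((n : ℝ) - 1 / 2)) := by
  have hK := intervalIntegrable_one_sub_sq_rpow n
  have hcosK : IntervalIntegrable (fun t => cos (r * t) * (1 - t ^ 2) ^ ((n : ℝ) - 1 / 2))
      volume (-1) 1 :=
    hK.continuousOn_mul (by fun_prop)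
  have hK_nonneg : ∀ t ∈ Icc (-1 : ℝ) 1, 0 ≤ (1 - t ^ 2) ^ ((n : ℝ) - 1 / 2) :=
    fun t ht => rpow_nonneg (by nlinarith [ht.1, ht.2]) _
  have hcos : ∀ t ∈ Icc (-1 : ℝ) 1, 1 / 2 ≤ cos (r * t) := fun t ht =>
    half_le_cos_of_abs_le_one <| by
      rw [abs_mul]; exact mul_le_one₀ hr (abs_nonneg t) (abs_le.2 ht)
  constructor
  · rw [← intervalIntegral.integral_const_mul]
    exact intervalIntegral.integral_mono_on (by norm_num) (hK.const_mul _) hcosK fun t ht =>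
      mul_le_mul_of_nonneg_right (hcos t ht) (hK_nonneg t ht)
  · exact intervalIntegral.integral_mono_on (by norm_num) hcosK hK fun t ht =>
      mul_le_of_le_one_left (hK_nonneg t ht) (cos_le_one _)

theorem bessel_two_sided_bound (n : ℕ) (r : ℝ) (hr : r ∈ Set.Ioo (0 : ℝ) 1) :
    0 < r ^ n / (2 ^ (n + 1) * Nat.factorial n) ∧
      r ^ n / (2 ^ (n + 1) * Nat.factorial n) ≤ besselJ n r ∧
      besselJ n r ≤ r ^ n / (2 ^ n * Nat.factorial n) := by
  obtain ⟨hr0, hr1⟩ := hr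
  obtain ⟨hlower, hupper⟩ :=
    integral_cos_mul_one_sub_sq_rpow_mem_Icc n (abs_le.2 ⟨by linarith, hr1.le⟩)
  rw [integral_one_sub_sq_rpow] at hlower hupper
  have hc : 0 ≤ r ^ n / (2 ^ n * Gamma ((n : ℝ) + 1 / 2) * √π) := by positivity
  refine ⟨by positivity, ?_, ?_⟩
  · calc r ^ n / (2 ^ (n + 1) * n !)
        = r ^ n / (2 ^ n * Gamma ((n : ℝ) + 1 / 2) * √π) *
            ((1 / 2) * (√π * Gamma ((n : ℝ) + 1 / 2) / n !)) := by
          rw [pow_succ]; field_simp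
      _ ≤ besselJ n r := mul_le_mul_of_nonneg_left hlower hc
  · calc besselJ n r
        ≤ r ^ n / (2 ^ n * Gamma ((n : ℝ) + 1 / 2) * √π) *
            (√π * Gamma ((n : ℝ) + 1 / 2) / n !) := mul_le_mul_of_nonneg_left hupper hc
      _ = r ^ n / (2 ^ n * n !) := by field_simp
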